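/- arXiv:2406.16673 — 3 statements merged into one kernel-verified Lean document; each statement's English description precedes it below -/
import Mathlib

section
/- Define T : ℕ → ℝ by T(1) = 4 and T(n) = 2^{n+1}(n·2^{n−1} + T(n−1)) for n ≥ 2. Then for all n ≥ 1, T(n) ≤ 4 · 2^{n + n(n+1)/2}. -/
/-!
Dividing the recurrence by `2 ^ (n + n(n+1)/2)` gives
`T n / 2 ^ (n + n(n+1)/2) = 1 + ∑_{d=2}^n d 2^{-d(d-1)/2} ≤ 1 + ∑_{d=2}^n d 2^{1-d} = 4 - (n+2) 2^{1-n}`.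
Keeping the slack term `(n+2) 2^{1-n}` makes the bound inductive; multiplied back out, the
comparison `2^{-d(d-1)/2} ≤ 2^{1-d}` becomes `n ≤ n(n+1)/2`.
-/

lemma triangle_add_one (n : ℕ) : (n + 1) * (n + 1 + 1) / 2 = n * (n + 1) / 2 + (n + 1) := by
  rw [show (n + 1) * (n + 1 + 1) = n * (n + 1) + 2 * (n + 1) by ring, Nat.add_mul_div_left _ _ two_pos]

lemma le_triangle (n : ℕ) : n ≤ n * (n + 1) / 2 := by
  rw [Nat.le_div_iff_mul_le two_pos]
  rcases n with _ | n
  · simp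
  · nlinarith

theorem add_slack_le_of_rec (T : ℕ → ℝ) (hT1 : T 1 = 4)
    (hTrec : ∀ n, 2 ≤ n → T n = 2 ^ (n + 1) * (n * 2 ^ (n - 1) + T (n - 1))) :
    ∀ n, 1 ≤ n → T n + (n + 2) * 2 ^ (n * (n + 1) / 2 + 1) ≤ 4 * 2 ^ (n + n * (n + 1) / 2) := by
  intro n hn
  induction n, hn using Nat.le_induction with
  | base => norm_num [hT1]
  | succ n hn ih =>
    set t := n * (n + 1) / 2 with ht
    have hpow : (2 : ℝ) ^ n ≤ 2 ^ t := pow_le_pow_right₀ one_le_two (le_triangle n)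
    rw [hTrec (n + 1) (by omega), triangle_add_one, ← ht, Nat.add_sub_cancel]
    simp only [pow_add, pow_one] at ih ⊢
    push_cast
    linarith [mul_le_mul_of_nonneg_left ih (by positivity : (0 : ℝ) ≤ 4 * 2 ^ n),
      mul_le_mul_of_nonneg_left hpow (by positivity : (0 : ℝ) ≤ (n + 1) * 2 ^ n)]

theorem stmt_9 (T : ℕ → ℝ) (hT1 : T 1 = 4)
    (hTrec : ∀ n, 2 ≤ n → T n = 2 ^ (n + 1) * (n * 2 ^ (n - 1) + T (n - 1))) :
    ∀ n, 1 ≤ n → T n ≤ 4 * 2 ^ (n + n * (n + 1) / 2) := by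
  intro n hn
  have hslack : (0 : ℝ) ≤ (n + 2) * 2 ^ (n * (n + 1) / 2 + 1) := by positivity
  linarith [add_slack_le_of_rec T hT1 hTrec n hn]
end

section
/- Let P₀, …, P_{m−1} ∈ ℂ. Then max over choices c_x ∈ {0,1,2,3} of |∑_{x} i^{c_x} P_x| is at least (2√2/π) · ∑_x |P_x|. -/
/-!
Rotating every `P x` by a suitable power of `i` turns the real part of `e^{-iθ} P x` into
`|P x| · max (|cos φ|, |sin φ|)` with `φ = arg (P x) - θ`, so for every `θ` some choice of the `c x`
gives `|∑ i^{c x} P x| ≥ ∑ |P x| · max (|cos φ|, |sin φ|)`. The function `max (|cos|, |sin|)` has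
mean `2√2/π` over a period, hence some `θ` makes the right-hand side at least
`(2√2/π) ∑ |P x|`.
-/

open Real Complex intervalIntegral MeasureTheory

noncomputable def quarterMax (θ : ℝ) : ℝ := max |Real.cos θ| |Real.sin θ|

lemma continuous_quarterMax : Continuous quarterMax :=
  Real.continuous_cos.abs.max Real.continuous_sin.abs

lemma quarterMax_periodic : Function.Periodic quarterMax (π / 2) := by
  intro θ
  simp [quarterMax, Real.cos_add_pi_div_two, Real.sin_add_pi_div_two, max_comm]

lemma quarterMax_pi_div_two_sub (θ : ℝ) : quarterMax (π / 2 - θ) = quarterMax θ := by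
  simp [quarterMax, Real.cos_pi_div_two_sub, Real.sin_pi_div_two_sub, max_comm]

lemma quarterMax_eq_cos {θ : ℝ} (hθ : θ ∈ Set.Icc 0 (π / 4)) : quarterMax θ = Real.cos θ := by
  obtain ⟨h0, hθ⟩ := hθ
  have hcos : 0 ≤ Real.cos θ := Real.cos_nonneg_of_mem_Icc ⟨by linarith [pi_pos], by linarith⟩
  have hsin : 0 ≤ Real.sin θ := Real.sin_nonneg_of_nonneg_of_le_pi h0 (by linarith [pi_pos])
  have hle : Real.sin θ ≤ Real.cos θ := by
    rw [← Real.sin_pi_div_two_sub]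
    exact Real.sin_le_sin_of_le_of_le_pi_div_two (by linarith) (by linarith) (by linarith)
  rw [quarterMax, abs_of_nonneg hcos, abs_of_nonneg hsin, max_eq_left hle]

lemma integral_quarterMax_zero_pi_div_two : ∫ θ in (0 : ℝ)..(π / 2), quarterMax θ = √2 := by
  have hint : ∀ a b : ℝ, IntervalIntegrable quarterMax volume a b :=
    fun _ _ ↦ continuous_quarterMax.intervalIntegrable _ _
  have h_first : ∫ θ in (0 : ℝ)..(π / 4), quarterMax θ = √2 / 2 := by
    rw [integral_congr fun θ hθ ↦ quarterMax_eq_cos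
        (Set.uIcc_of_le (by positivity : (0 : ℝ) ≤ π / 4) ▸ hθ),
      integral_cos, Real.sin_pi_div_four, Real.sin_zero, sub_zero]
  -- the reflection `θ ↦ π/2 - θ` maps `[π/4, π/2]` onto `[0, π/4]`
  have h_second : ∫ θ in (π / 4)..(π / 2), quarterMax θ = √2 / 2 := by
    rw [← integral_congr fun θ _ ↦ quarterMax_pi_div_two_sub θ, integral_comp_sub_left, sub_self,
      show π / 2 - π / 4 = π / 4 by ring, h_first]
  rw [← integral_add_adjacent_intervals (hint _ (π / 4)) (hint _ _), h_first, h_second]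
  ring

lemma integral_quarterMax_sub (φ : ℝ) : ∫ θ in (0 : ℝ)..(2 * π), quarterMax (φ - θ) = 4 * √2 := by
  have h := quarterMax_periodic.intervalIntegral_add_zsmul_eq 4 (φ - 2 * π)
    (fun _ _ ↦ continuous_quarterMax.intervalIntegrable _ _)
  rw [show φ - 2 * π + (4 : ℤ) • (π / 2) = φ by simp only [zsmul_eq_mul]; push_cast; ring] at h
  rw [integral_comp_sub_left, sub_zero, h, quarterMax_periodic.intervalIntegral_add_eq _ 0,
    zero_add, integral_quarterMax_zero_pi_div_two, zsmul_eq_mul, Int.cast_ofNat]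

lemma exp_neg_mul_I_mul (w : ℂ) (θ : ℝ) :
    exp (-θ * I) * w = ‖w‖ * exp ((arg w - θ : ℝ) * I) := by
  conv_lhs => rw [← norm_mul_exp_arg_mul_I w]
  rw [mul_left_comm, ← Complex.exp_add]
  push_cast
  ring_nf

lemma max_abs_re_im_exp_neg_mul_I_mul (w : ℂ) (θ : ℝ) :
    max |(exp (-θ * I) * w).re| |(exp (-θ * I) * w).im| = ‖w‖ * quarterMax (arg w - θ) := by
  rw [exp_neg_mul_I_mul, re_ofReal_mul, im_ofReal_mul, exp_ofReal_mul_I_re, exp_ofReal_mul_I_im,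
    abs_mul, abs_mul, abs_norm, ← mul_max_of_nonneg _ _ (norm_nonneg w), quarterMax]

lemma exists_re_pow_I_mul_eq_max (w : ℂ) :
    ∃ c : Fin 4, (I ^ (c : ℕ) * w).re = max |w.re| |w.im| := by
  rcases le_total |w.im| |w.re| with h | h
  · rw [max_eq_left h]
    rcases le_total 0 w.re with hr | hr
    · exact ⟨0, by simp [abs_of_nonneg hr]⟩
    · exact ⟨2, by simp [abs_of_nonpos hr]⟩
  · rw [max_eq_right h]
    rcases le_total 0 w.im with hi | hi
    · exact ⟨3, by simp [pow_succ, abs_of_nonneg hi]⟩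
    · exact ⟨1, by simp [abs_of_nonpos hi]⟩

lemma exists_intervalAverage_le {f : ℝ → ℝ} (hf : Continuous f) {a b : ℝ} (hab : a ≠ b) :
    ∃ θ, (b - a)⁻¹ * ∫ t in a..b, f t ≤ f θ := by
  have hvol : volume (Set.uIoc a b) ≠ 0 := by
    rw [Real.volume_uIoc, Ne, ENNReal.ofReal_eq_zero, not_le, abs_pos, sub_ne_zero]
    exact hab.symm
  obtain ⟨θ, -, hθ⟩ := exists_setAverage_le hvol (by simp [Real.volume_uIoc])
    (hf.intervalIntegrable a b).def'
  exact ⟨θ, by rwa [interval_average_eq, smul_eq_mul] at hθ⟩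

variable {ι : Type*} [Fintype ι]

lemma exists_sum_quarterMax_le_norm_sum (P : ι → ℂ) (θ : ℝ) :
    ∃ c : ι → Fin 4, ∑ x, ‖P x‖ * quarterMax (arg (P x) - θ) ≤ ‖∑ x, I ^ (c x : ℕ) * P x‖ := by
  choose c hc using fun x ↦ exists_re_pow_I_mul_eq_max (exp (-θ * I) * P x)
  refine ⟨c, ?_⟩
  calc ∑ x, ‖P x‖ * quarterMax (arg (P x) - θ)
      = (exp (-θ * I) * ∑ x, I ^ (c x : ℕ) * P x).re := by
        rw [Finset.mul_sum, re_sum]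
        refine Finset.sum_congr rfl fun x _ ↦ ?_
        rw [mul_left_comm, hc, max_abs_re_im_exp_neg_mul_I_mul]
    _ ≤ ‖exp (-θ * I) * ∑ x, I ^ (c x : ℕ) * P x‖ := re_le_norm _
    _ = ‖∑ x, I ^ (c x : ℕ) * P x‖ := by simp [Complex.norm_exp]

lemma exists_le_sum_quarterMax (P : ι → ℂ) :
    ∃ θ, 2 * √2 / π * ∑ x, ‖P x‖ ≤ ∑ x, ‖P x‖ * quarterMax (arg (P x) - θ) := by
  have hcont (x : ι) : Continuous fun θ ↦ ‖P x‖ * quarterMax (arg (P x) - θ) :=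
    continuous_const.mul (continuous_quarterMax.comp (continuous_const.sub continuous_id))
  obtain ⟨θ, hθ⟩ := exists_intervalAverage_le (continuous_finsetSum _ fun x _ ↦ hcont x)
    (two_pi_pos.ne : 0 ≠ 2 * π)
  refine ⟨θ, le_of_eq_of_le ?_ hθ⟩
  rw [intervalIntegral.integral_finsetSum fun x _ ↦ (hcont x).intervalIntegrable _ _]
  simp only [intervalIntegral.integral_const_mul, integral_quarterMax_sub, ← Finset.sum_mul]
  field_simp
  ring

theorem stmt_11 (m : ℕ) (P : Fin m → ℂ) :
    ∃ c : Fin m → Fin 4,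
      2 * Real.sqrt 2 / Real.pi * ∑ x, ‖P x‖ ≤
        ‖∑ x, Complex.I ^ (c x : ℕ) * P x‖ := by
  obtain ⟨θ, hθ⟩ := exists_le_sum_quarterMax P
  obtain ⟨c, hc⟩ := exists_sum_quarterMax_le_norm_sum P θ
  exact ⟨c, hθ.trans hc⟩
end

section
/- Let k ≥ 1 and Q ∈ F_2^{k×k} upper triangular, R ∈ F_2^{n×k} of rank k, t ∈ F_2^n, c ∈ F_2^k. The two matrices Q and the vector c are uniquely determined by the function x ↦ (−1)^{xᵀQx} i^{cᵀx} from F_2^k to {1, −1, i, −i}: if (Q₁, c₁) and (Q₂, c₂) induce the same phase function, then Q₁ = Q₂ and c₁ = c₂. -/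
open Matrix

lemma eq_and_eq_of_neg_one_pow_mul_I_pow_eq {a₁ b₁ a₂ b₂ : ZMod 2}
    (h : (-1 : ℂ) ^ a₁.val * Complex.I ^ b₁.val = (-1 : ℂ) ^ a₂.val * Complex.I ^ b₂.val) :
    a₁ = a₂ ∧ b₁ = b₂ := by
  fin_cases a₁ <;> fin_cases b₁ <;> fin_cases a₂ <;> fin_cases b₂ <;>
    first | exact ⟨rfl, rfl⟩ | norm_num [ZMod.val, Complex.ext_iff] at h

namespace Matrix

variable {ι R : Type*} [Fintype ι] [DecidableEq ι] [CommRing R]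

lemma single_one_dotProduct_mulVec_single_one (Q : Matrix ι ι R) (i : ι) :
    Pi.single i 1 ⬝ᵥ Q *ᵥ Pi.single i 1 = Q i i := by
  simp

lemma single_add_single_dotProduct_mulVec (Q : Matrix ι ι R) (i j : ι) :
    (Pi.single i 1 + Pi.single j 1) ⬝ᵥ Q *ᵥ (Pi.single i 1 + Pi.single j 1) =
      Q i i + Q i j + Q j i + Q j j := by
  simp only [mulVec_add, dotProduct_add, add_dotProduct, mulVec_single_one,
    single_one_dotProduct, col_apply]
  ring

/-- An upper triangular matrix is determined by its quadratic form: the form at `eᵢ` gives the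
diagonal and at `eᵢ + eⱼ` the entry `Q i j`, its transposed partner `Q j i` being zero. -/
lemma eq_of_blockTriangular_of_dotProduct_mulVec_self_eq [LinearOrder ι]
    {Q₁ Q₂ : Matrix ι ι R} (hQ₁ : Q₁.BlockTriangular id) (hQ₂ : Q₂.BlockTriangular id)
    (h : ∀ x, x ⬝ᵥ Q₁ *ᵥ x = x ⬝ᵥ Q₂ *ᵥ x) : Q₁ = Q₂ := by
  have hdiag (i : ι) : Q₁ i i = Q₂ i i := by
    simpa only [single_one_dotProduct_mulVec_single_one] using h (Pi.single i 1)
  ext i j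
  rcases lt_trichotomy i j with hij | rfl | hij
  · have := h (Pi.single i 1 + Pi.single j 1)
    rw [single_add_single_dotProduct_mulVec, single_add_single_dotProduct_mulVec,
      hQ₁ hij, hQ₂ hij, hdiag i, hdiag j] at this
    simpa using this
  · exact hdiag i
  · rw [hQ₁ hij, hQ₂ hij]

end Matrix

theorem stmt_18_general (k : ℕ)
    (Q₁ Q₂ : Matrix (Fin k) (Fin k) (ZMod 2))
    (hQ₁ : ∀ i j, j < i → Q₁ i j = 0) (hQ₂ : ∀ i j, j < i → Q₂ i j = 0)
    (c₁ c₂ : Fin k → ZMod 2)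
    (hphase : ∀ x : Fin k → ZMod 2,
      (-1 : ℂ) ^ (x ⬝ᵥ Q₁.mulVec x).val * Complex.I ^ (c₁ ⬝ᵥ x).val =
        (-1 : ℂ) ^ (x ⬝ᵥ Q₂.mulVec x).val * Complex.I ^ (c₂ ⬝ᵥ x).val) :
    Q₁ = Q₂ ∧ c₁ = c₂ := by
  have hexp x := eq_and_eq_of_neg_one_pow_mul_I_pow_eq (hphase x)
  refine ⟨eq_of_blockTriangular_of_dotProduct_mulVec_self_eq (fun i j h ↦ hQ₁ i j h)
    (fun i j h ↦ hQ₂ i j h) fun x ↦ (hexp x).1, ?_⟩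
  exact dotProduct_eq c₁ c₂ fun x ↦ (hexp x).2

open Matrix in
theorem stmt_18 (n k : ℕ) (hk : 1 ≤ k)
    (Q₁ Q₂ : Matrix (Fin k) (Fin k) (ZMod 2))
    (hQ₁ : ∀ i j, j < i → Q₁ i j = 0) (hQ₂ : ∀ i j, j < i → Q₂ i j = 0)
    (c₁ c₂ : Fin k → ZMod 2)
    (R : Matrix (Fin n) (Fin k) (ZMod 2)) (hR : R.rank = k) (t : Fin n → ZMod 2)
    (hphase : ∀ x : Fin k → ZMod 2,
      (-1 : ℂ) ^ (x ⬝ᵥ Q₁.mulVec x).val * Complex.I ^ (c₁ ⬝ᵥ x).val =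
        (-1 : ℂ) ^ (x ⬝ᵥ Q₂.mulVec x).val * Complex.I ^ (c₂ ⬝ᵥ x).val) :
    Q₁ = Q₂ ∧ c₁ = c₂ :=
  stmt_18_general k Q₁ Q₂ hQ₁ hQ₂ c₁ c₂ hphase
end
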